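/- arXiv:2601.20280 — 3 statements merged into one kernel-verified Lean document; each statement's English description precedes it below -/
import Mathlib

section
/- Let μ be a probability measure on a measurable space Ω, and let E, H be finite-dimensional real inner product spaces. Let F : E → H be continuously differentiable with operator norm of its derivative uniformly bounded: ‖fderiv F z‖ ≤ L for all z ∈ E, for some L ≥ 0. Let X : Ω → E and Y : Ω → H be measurable with ∫‖Y − F(X)‖² dμ < ∞, and let u : Ω → E be measurable with ‖u(ω)‖ ≤ C for all ω, for some C ≥ 0. If A := ∫ ⟨ Y(ω) − F(X(ω)), (fderiv F (X(ω)))(u(ω)) ⟩ dμ(ω) > 0, then there exists ε > 0 such that for every δ ∈ (0, ε], ∫‖Y − F(X + δ·u)‖² dμ < ∫‖Y − F(X)‖² dμ. -/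
open MeasureTheory Filter Topology Set Metric
open scoped InnerProductSpace

/-!
The risk `R δ = ∫ ‖Y - F (X + δ • u)‖²` is differentiable at `0` with `R' 0 = -2 A`. Pointwise,
the `δ`-derivative of the integrand is `-2 ⟪Y - F (X + δ • u), DF (X + δ • u) u⟫`; for `|δ| ≤ 1`
the mean value inequality bounds it by `2 (‖Y - F X‖ + L C) L C`, which is integrable because the
residual is square integrable for a finite measure, so we may differentiate under the integral.
A negative derivative at `0` makes `R` drop strictly just to the right of `0`.
-/

theorem HasDerivAt.exists_forall_Ioc_lt_of_deriv_neg {f : ℝ → ℝ} {f' a : ℝ}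
    (hf : HasDerivAt f f' a) (hf' : f' < 0) :
    ∃ ε > 0, ∀ δ, 0 < δ → δ ≤ ε → f (a + δ) < f a := by
  have hdecr : ∀ᶠ t in 𝓝[>] (0 : ℝ), f (a + t) < f a := by
    filter_upwards [hf.tendsto_slope_zero_right.eventually_lt_const hf', self_mem_nhdsWithin]
      with t hslope (ht : 0 < t)
    rw [smul_eq_mul, inv_mul_lt_iff₀ ht, mul_zero, sub_neg] at hslope
    exact hslope
  obtain ⟨ε, hε, hsub⟩ := mem_nhdsGT_iff_exists_Ioc_subset.mp hdecr
  exact ⟨ε, hε, fun δ hδ hδε => hsub ⟨hδ, hδε⟩⟩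

section

variable {E H : Type*} [NormedAddCommGroup E] [NormedSpace ℝ E]
  [NormedAddCommGroup H] [InnerProductSpace ℝ H] {F : E → H}

theorem hasDerivAt_norm_sub_sq_along_line (hF : Differentiable ℝ F) (y : H) (x u : E) (s : ℝ) :
    HasDerivAt (fun t : ℝ => ‖y - F (x + t • u)‖ ^ 2)
      (-(2 * ⟪y - F (x + s • u), fderiv ℝ F (x + s • u) u⟫_ℝ)) s := by
  have hline : HasDerivAt (fun t : ℝ => x + t • u) u s := by
    simpa using ((hasDerivAt_id s).smul_const u).const_add x
  simpa [inner_neg_right] using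
    (((hF _).hasFDerivAt.comp_hasDerivAt s hline).const_sub y).norm_sq

theorem norm_deriv_norm_sub_sq_along_line_le (hF : Differentiable ℝ F) {L C : ℝ}
    (hFL : ∀ z, ‖fderiv ℝ F z‖ ≤ L) (y : H) (x : E) {u : E} (hu : ‖u‖ ≤ C) {s : ℝ}
    (hs : |s| ≤ 1) :
    ‖-(2 * ⟪y - F (x + s • u), fderiv ℝ F (x + s • u) u⟫_ℝ)‖
      ≤ 2 * ((‖y - F x‖ + L * C) * (L * C)) := by
  have hL : 0 ≤ L := (norm_nonneg _).trans (hFL x)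
  have hsu : ‖s • u‖ ≤ C := by
    rw [norm_smul, Real.norm_eq_abs]
    exact (mul_le_of_le_one_left (norm_nonneg u) hs).trans hu
  have hincr : ‖F (x + s • u) - F x‖ ≤ L * C := by
    calc ‖F (x + s • u) - F x‖ ≤ L * ‖x + s • u - x‖ :=
          convex_univ.norm_image_sub_le_of_norm_fderiv_le (fun z _ => hF z) (fun z _ => hFL z)
            (mem_univ _) (mem_univ _)
      _ ≤ L * C := by rw [add_sub_cancel_left]; exact mul_le_mul_of_nonneg_left hsu hL
  have hres : ‖y - F (x + s • u)‖ ≤ ‖y - F x‖ + L * C := by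
    calc ‖y - F (x + s • u)‖ = ‖(y - F x) - (F (x + s • u) - F x)‖ := by congr 1; abel
      _ ≤ ‖y - F x‖ + L * C := (norm_sub_le _ _).trans (add_le_add_right hincr _)
  have hJu : ‖fderiv ℝ F (x + s • u) u‖ ≤ L * C :=
    (ContinuousLinearMap.le_opNorm _ _).trans (mul_le_mul (hFL _) hu (norm_nonneg _) hL)
  calc ‖-(2 * ⟪y - F (x + s • u), fderiv ℝ F (x + s • u) u⟫_ℝ)‖
      = 2 * |⟪y - F (x + s • u), fderiv ℝ F (x + s • u) u⟫_ℝ| := by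
        rw [norm_neg, norm_mul, Real.norm_two, Real.norm_eq_abs]
    _ ≤ 2 * (‖y - F (x + s • u)‖ * ‖fderiv ℝ F (x + s • u) u‖) := by
        gcongr; exact abs_real_inner_le_norm _ _
    _ ≤ 2 * ((‖y - F x‖ + L * C) * (L * C)) := by
        gcongr 2 * ?_
        exact mul_le_mul hres hJu (norm_nonneg _) ((norm_nonneg _).trans hres)

theorem hasDerivAt_integral_norm_sub_sq_along_line {Ω : Type*} [MeasurableSpace Ω]
    {μ : Measure Ω} [IsFiniteMeasure μ]
    [MeasurableSpace E] [BorelSpace E] [SecondCountableTopology E]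
    [MeasurableSpace H] [BorelSpace H] [SecondCountableTopology H]
    (hF : ContDiff ℝ 1 F) {L C : ℝ} (hFL : ∀ z, ‖fderiv ℝ F z‖ ≤ L)
    {X u : Ω → E} {Y : Ω → H} (hX : Measurable X) (hY : Measurable Y) (hu : Measurable u)
    (huC : ∀ ω, ‖u ω‖ ≤ C) (hint : Integrable (fun ω => ‖Y ω - F (X ω)‖ ^ 2) μ) :
    HasDerivAt (fun t : ℝ => ∫ ω, ‖Y ω - F (X ω + t • u ω)‖ ^ 2 ∂μ)
      (-(2 * ∫ ω, ⟪Y ω - F (X ω), fderiv ℝ F (X ω) (u ω)⟫_ℝ ∂μ)) 0 := by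
  have hFd : Differentiable ℝ F := hF.differentiable one_ne_zero
  have hres_meas (t : ℝ) : AEStronglyMeasurable (fun ω => Y ω - F (X ω + t • u ω)) μ :=
    (hY.sub (hF.continuous.measurable.comp (hX.add (hu.const_smul t)))).aestronglyMeasurable
  have hres0 : AEStronglyMeasurable (fun ω => Y ω - F (X ω)) μ := by simpa using hres_meas 0
  have hres_int : Integrable (fun ω => ‖Y ω - F (X ω)‖) μ :=
    (((memLp_two_iff_integrable_sq_norm hres0).mpr hint).integrable one_le_two).norm
  have hJu_meas : AEStronglyMeasurable (fun ω => fderiv ℝ F (X ω) (u ω)) μ :=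
    ((hF.continuous_fderiv one_ne_zero).comp continuous_fst |>.clm_apply continuous_snd)
      |>.comp_aestronglyMeasurable (hX.aestronglyMeasurable.prodMk hu.aestronglyMeasurable)
  have hderiv_meas :
      AEStronglyMeasurable (fun ω => -(2 * ⟪Y ω - F (X ω), fderiv ℝ F (X ω) (u ω)⟫_ℝ)) μ :=
    ((hres0.inner hJu_meas).const_mul 2).neg
  have hdiff := hasDerivAt_integral_of_dominated_loc_of_deriv_le (μ := μ)
    (ball_mem_nhds (0 : ℝ) one_pos)
    (F := fun t ω => ‖Y ω - F (X ω + t • u ω)‖ ^ 2)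
    (F' := fun t ω => -(2 * ⟪Y ω - F (X ω + t • u ω), fderiv ℝ F (X ω + t • u ω) (u ω)⟫_ℝ))
    (bound := fun ω => 2 * ((‖Y ω - F (X ω)‖ + L * C) * (L * C)))
    (Eventually.of_forall fun t => (hres_meas t).norm.pow 2) (by simpa using hint)
    (by simpa using hderiv_meas)
    (ae_of_all _ fun ω t ht => norm_deriv_norm_sub_sq_along_line_le hFd hFL (Y ω) (X ω) (huC ω)
      (by rw [mem_ball_zero_iff, Real.norm_eq_abs] at ht; exact ht.le))
    (((hres_int.add (integrable_const _)).mul_const _).const_mul 2)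
    (ae_of_all _ fun ω t _ => hasDerivAt_norm_sub_sq_along_line hFd (Y ω) (X ω) (u ω) t)
  simpa [integral_neg, integral_const_mul] using hdiff.2

end

theorem input_adapter_small_step_improvement_general
    {Ω : Type*} [MeasurableSpace Ω] (μ : Measure Ω) [IsProbabilityMeasure μ]
    {E : Type*} [NormedAddCommGroup E] [InnerProductSpace ℝ E] [FiniteDimensional ℝ E]
    [MeasurableSpace E] [BorelSpace E]
    {H : Type*} [NormedAddCommGroup H] [InnerProductSpace ℝ H] [FiniteDimensional ℝ H]
    [MeasurableSpace H] [BorelSpace H]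
    (F : E → H) (hF : ContDiff ℝ 1 F)
    (L : ℝ) (hFL : ∀ z : E, ‖fderiv ℝ F z‖ ≤ L)
    (X : Ω → E) (Y : Ω → H) (hX : Measurable X) (hY : Measurable Y)
    (hint : Integrable (fun ω => ‖Y ω - F (X ω)‖ ^ 2) μ)
    (u : Ω → E) (hu : Measurable u)
    (C : ℝ) (huC : ∀ ω, ‖u ω‖ ≤ C)
    (hA : 0 < ∫ ω, (inner ℝ (Y ω - F (X ω)) ((fderiv ℝ F (X ω)) (u ω)) : ℝ) ∂μ) :
    ∃ ε > 0, ∀ δ : ℝ, 0 < δ → δ ≤ ε →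
      ∫ ω, ‖Y ω - F (X ω + δ • u ω)‖ ^ 2 ∂μ
        < ∫ ω, ‖Y ω - F (X ω)‖ ^ 2 ∂μ := by
  have hrisk := hasDerivAt_integral_norm_sub_sq_along_line hF hFL hX hY hu huC hint
  obtain ⟨ε, hε, hdecr⟩ := hrisk.exists_forall_Ioc_lt_of_deriv_neg (by linarith)
  exact ⟨ε, hε, fun δ hδ hδε => by simpa using hdecr δ hδ hδε⟩

/-- small-step improvement guarantee for input-side adapters.
If the Jacobian-aligned signal `A = ∫⟨Y − F(X), J_F(X) u⟩ dμ` is positive, then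
every sufficiently small positive input nudge strictly reduces the risk. -/
theorem input_adapter_small_step_improvement
    {Ω : Type*} [MeasurableSpace Ω] (μ : Measure Ω) [IsProbabilityMeasure μ]
    {E : Type*} [NormedAddCommGroup E] [InnerProductSpace ℝ E] [FiniteDimensional ℝ E]
    [MeasurableSpace E] [BorelSpace E]
    {H : Type*} [NormedAddCommGroup H] [InnerProductSpace ℝ H] [FiniteDimensional ℝ H]
    [MeasurableSpace H] [BorelSpace H]
    (F : E → H) (hF : ContDiff ℝ 1 F)
    (L : ℝ) (hL : 0 ≤ L) (hFL : ∀ z : E, ‖fderiv ℝ F z‖ ≤ L)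
    (X : Ω → E) (Y : Ω → H) (hX : Measurable X) (hY : Measurable Y)
    (hint : Integrable (fun ω => ‖Y ω - F (X ω)‖ ^ 2) μ)
    (u : Ω → E) (hu : Measurable u)
    (C : ℝ) (hC : 0 ≤ C) (huC : ∀ ω, ‖u ω‖ ≤ C)
    (hA : 0 < ∫ ω, (inner ℝ (Y ω - F (X ω)) ((fderiv ℝ F (X ω)) (u ω)) : ℝ) ∂μ) :
    ∃ ε > 0, ∀ δ : ℝ, 0 < δ → δ ≤ ε →
      ∫ ω, ‖Y ω - F (X ω + δ • u ω)‖ ^ 2 ∂μ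
        < ∫ ω, ‖Y ω - F (X ω)‖ ^ 2 ∂μ :=
  input_adapter_small_step_improvement_general μ F hF L hFL X Y hX hY hint u hu C huC hA
end

section
/- Let x, a ∈ EuclideanSpace ℝ (Fin n), let B_X ≥ 0 with |x(i)| ≤ B_X for all i, let |a(i)| ≤ 1 for all i, and let δ ≥ 0. Define x̃ ∈ EuclideanSpace ℝ (Fin n) by x̃(i) := x(i) · exp(δ · a(i)). Then ‖x̃ − x‖ ≤ δ · exp(δ) · B_X · ‖a‖, where ‖·‖ denotes the Euclidean norm. -/
/-! Each coordinate of `xt - x` is `x i * (exp (δ * a i) - 1)`, and the mean value bound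
`|exp t - 1| ≤ |t| * exp |t|` makes it at most `δ * exp δ * B * |a i|`. A coordinatewise
domination of this kind passes to Euclidean norms. -/

open Real

theorem Real.abs_exp_sub_one_le_abs_mul_exp_abs (t : ℝ) : |exp t - 1| ≤ |t| * exp |t| := by
  rcases le_total 0 t with ht | ht
  · rw [abs_of_nonneg ht, abs_of_nonneg (sub_nonneg.2 (one_le_exp ht))]
    calc exp t - 1 = exp t * (1 - exp (-t)) := by rw [mul_sub, ← exp_add]; simp
      _ ≤ exp t * t := by gcongr; linarith [add_one_le_exp (-t)]
      _ = t * exp t := mul_comm _ _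
  · rw [abs_of_nonpos ht, abs_of_nonpos (sub_nonpos.2 (exp_le_one_iff.2 ht))]
    calc -(exp t - 1) ≤ -t := by linarith [add_one_le_exp t]
      _ ≤ -t * exp (-t) := le_mul_of_one_le_right (by linarith) (one_le_exp (by linarith))

theorem Real.abs_mul_exp_sub_self_le (x t : ℝ) : |x * exp t - x| ≤ |x| * (|t| * exp |t|) := by
  rw [← mul_sub_one, abs_mul]
  exact mul_le_mul_of_nonneg_left (abs_exp_sub_one_le_abs_mul_exp_abs t) (abs_nonneg x)

theorem EuclideanSpace.norm_le_mul_norm_of_forall_norm_le {𝕜 ι : Type*} [RCLike 𝕜] [Fintype ι]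
    {u v : EuclideanSpace 𝕜 ι} {c : ℝ} (hc : 0 ≤ c) (h : ∀ i, ‖u i‖ ≤ c * ‖v i‖) :
    ‖u‖ ≤ c * ‖v‖ := by
  rw [← sq_le_sq₀ (norm_nonneg _) (by positivity), mul_pow, EuclideanSpace.norm_sq_eq,
    EuclideanSpace.norm_sq_eq, Finset.mul_sum]
  gcongr with i
  rw [← mul_pow]
  exact pow_le_pow_left₀ (norm_nonneg _) (h i) 2

/-- coordinatewise mean-value estimate for the multiplicative
(exponential-form) input edit `x̃ i = x i · exp(δ · a i)`:
`‖x̃ − x‖ ≤ δ · exp(δ) · B_X · ‖a‖`. -/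
theorem multiplicative_edit_estimate
    {n : ℕ} (x a xt : EuclideanSpace ℝ (Fin n))
    (B : ℝ) (hB : 0 ≤ B) (hx : ∀ i, |x i| ≤ B) (ha : ∀ i, |a i| ≤ 1)
    (δ : ℝ) (hδ : 0 ≤ δ)
    (hxt : ∀ i, xt i = x i * Real.exp (δ * a i)) :
    ‖xt - x‖ ≤ δ * Real.exp δ * B * ‖a‖ := by
  refine EuclideanSpace.norm_le_mul_norm_of_forall_norm_le (by positivity) fun i => ?_
  have hδa : |δ * a i| = δ * |a i| := by rw [abs_mul, abs_of_nonneg hδ]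
  have hδa_le : δ * |a i| ≤ δ := mul_le_of_le_one_right hδ (ha i)
  simp only [PiLp.sub_apply, Real.norm_eq_abs]
  calc |xt i - x i| = |x i * exp (δ * a i) - x i| := by rw [hxt]
    _ ≤ |x i| * (|δ * a i| * exp |δ * a i|) := abs_mul_exp_sub_self_le _ _
    _ ≤ B * (δ * |a i| * exp δ) := by rw [hδa]; gcongr; exact hx i
    _ = δ * exp δ * B * |a i| := by ring
end

section
/- Let n ≥ 1, α ∈ (0, 1), and let (Ω, μ) be a probability space. Let R : Ω → (Fin (n+1) → ℝ) be measurable and exchangeable: for every permutation σ of Fin (n+1), the pushforward law of ω ↦ (R(ω) ∘ σ) under μ equals the pushforward law of R. Let k := ⌈(1−α)·(n+1)⌉ and suppose k ≤ n. Define Q(ω) to be the k-th order statistic (k-th smallest value) of the first n coordinates R(ω)(0), …, R(ω)(n−1). Then μ{ ω : R(ω)(n) ≤ Q(ω) } ≥ 1 − α. -/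
/-!
Let the strict rank of the `i`-th score be the number of scores strictly below it. The
coverage event says that the test score has strict rank at most `k - 1`. Whatever the
scores, the indices of the `k` smallest ones (in sorted order) all have strict rank at most
`k - 1`, so at least `k` of the `n + 1` events "the `i`-th score has strict rank at most
`k - 1`" occur. By exchangeability these events all have the probability of the coverage
event, hence `(n + 1) · P(coverage) ≥ k ≥ (1 - α)(n + 1)`.
-/

open MeasureTheory

/-- The `j`-th order statistic (0-indexed `j`-th smallest value) of a finite
tuple `f : Fin n → ℝ`, obtained via the sorting permutation `Tuple.sort`. -/
noncomputable def orderStat {n : ℕ} (f : Fin n → ℝ) (j : Fin n) : ℝ :=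
  f (Tuple.sort f j)

open Finset

section Rank

variable {α : Type*} [LinearOrder α]

noncomputable def strictRank {ι : Type*} [Fintype ι] (x : ι → α) (i : ι) : ℕ :=
  #{j | x j < x i}

theorem strictRank_comp_perm {ι : Type*} [Fintype ι] (x : ι → α) (σ : Equiv.Perm ι) (i : ι) :
    strictRank (x ∘ σ) i = strictRank x (σ i) :=
  card_equiv σ (by simp)

theorem Monotone.card_filter_lt_le_iff {m : ℕ} {g : Fin m → α} (hg : Monotone g) (c : α)
    (j : Fin m) : #{i | g i < c} ≤ j ↔ c ≤ g j := by
  refine ⟨fun h => ?_, fun h => ?_⟩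
  · by_contra! hj
    have hsub : Iic j ⊆ ({i | g i < c} : Finset (Fin m)) := fun i hi =>
      mem_filter.2 ⟨mem_univ i, (hg (mem_Iic.1 hi)).trans_lt hj⟩
    have := card_le_card hsub
    rw [Fin.card_Iic] at this
    omega
  · calc #{i | g i < c} ≤ #(Iio j) :=
          card_le_card fun i hi => mem_Iio.2 (hg.reflect_lt ((mem_filter.1 hi).2.trans_le h))
      _ = j := Fin.card_Iio j

theorem strictRank_sort_le {m : ℕ} (x : Fin m → α) (j : Fin m) :
    strictRank x (Tuple.sort x j) ≤ j := by
  rw [← strictRank_comp_perm]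
  exact ((Tuple.monotone_sort x).card_filter_lt_le_iff _ j).2 le_rfl

theorem le_card_filter_strictRank_le {m : ℕ} (x : Fin m → α) (j : Fin m) :
    (j : ℕ) + 1 ≤ #{i | strictRank x i ≤ j} :=
  calc (j : ℕ) + 1 = #(Iic j) := (Fin.card_Iic j).symm
    _ ≤ _ := card_le_card_of_injOn (Tuple.sort x)
      (fun i hi => by
        simp only [coe_Iic, Set.mem_Iic] at hi
        simpa using (strictRank_sort_le x i).trans hi)
      (Tuple.sort x).injective.injOn

theorem strictRank_last {n : ℕ} (x : Fin (n + 1) → α) :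
    strictRank x (Fin.last n) = #{i : Fin n | x i.castSucc < x (Fin.last n)} := by
  rw [strictRank, card_filter, card_filter, Fin.sum_univ_castSucc]
  simp

theorem measurable_strictRank {ι : Type*} [Fintype ι] [TopologicalSpace α] [OrderClosedTopology α]
    [SecondCountableTopology α] [MeasurableSpace α] [OpensMeasurableSpace α] (i : ι) :
    Measurable fun x : ι → α => strictRank x i := by
  simp_rw [strictRank, card_filter]
  exact Finset.measurable_sum _ fun j _ => Measurable.ite
    (measurableSet_lt (measurable_pi_apply j) (measurable_pi_apply i)) measurable_const
    measurable_const

end Rank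

theorem le_orderStat_iff {m : ℕ} (f : Fin m → ℝ) (c : ℝ) (j : Fin m) :
    c ≤ orderStat f j ↔ #{i | f i < c} ≤ j := by
  have hcard : #{i | (f ∘ Tuple.sort f) i < c} = #{i | f i < c} :=
    card_equiv (Tuple.sort f) (by simp)
  rw [← hcard]
  exact ((Tuple.monotone_sort f).card_filter_lt_le_iff c j).symm

open scoped ENNReal

section Exchangeable

variable {Ω ι : Type*} [MeasurableSpace Ω] [Fintype ι] {μ : Measure Ω}

open Classical in
theorem natCast_mul_measure_univ_le_sum_measure {A : ι → Set Ω} (hA : ∀ i, MeasurableSet (A i))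
    {k : ℕ} (hk : ∀ ω, k ≤ #{i | ω ∈ A i}) : k * μ Set.univ ≤ ∑ i, μ (A i) :=
  calc k * μ Set.univ = ∫⁻ _, (k : ℝ≥0∞) ∂μ := (lintegral_const _).symm
    _ ≤ ∫⁻ ω, ∑ i, (A i).indicator 1 ω ∂μ := lintegral_mono fun ω => by
      have hω := (Nat.cast_le (α := ℝ≥0∞)).2 (hk ω)
      rwa [natCast_card_filter] at hω
    _ = ∑ i, μ (A i) := by
      rw [lintegral_finsetSum _ fun i _ => measurable_one.indicator (hA i)]
      simp only [lintegral_indicator_one (hA _)]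

open Classical in
theorem natCast_le_card_mul_measure_of_exchangeable [DecidableEq ι] {β : Type*} [MeasurableSpace β]
    [IsProbabilityMeasure μ] {R : Ω → ι → β} (hR : Measurable R)
    (hexch : ∀ σ : Equiv.Perm ι, μ.map (fun ω => R ω ∘ σ) = μ.map R)
    {B : Set (ι → β)} (hB : MeasurableSet B) (i₀ : ι) {k : ℕ}
    (hk : ∀ x, k ≤ #{i | x ∘ Equiv.swap i i₀ ∈ B}) :
    (k : ℝ≥0∞) ≤ Fintype.card ι * μ (R ⁻¹' B) := by
  have hmeas (σ : Equiv.Perm ι) : Measurable fun ω => R ω ∘ σ :=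
    (measurable_pi_lambda _ fun j => measurable_pi_apply _).comp hR
  have hA (i : ι) : μ ((fun ω => R ω ∘ Equiv.swap i i₀) ⁻¹' B) = μ (R ⁻¹' B) := by
    rw [← Measure.map_apply (hmeas _) hB, hexch, Measure.map_apply hR hB]
  calc (k : ℝ≥0∞) = k * μ Set.univ := by simp
    _ ≤ ∑ i, μ ((fun ω => R ω ∘ Equiv.swap i i₀) ⁻¹' B) :=
      natCast_mul_measure_univ_le_sum_measure (fun i => hmeas _ hB) fun ω => hk (R ω)
    _ = Fintype.card ι * μ (R ⁻¹' B) := by simp [hA]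

end Exchangeable

theorem ENNReal.ofReal_le_of_ceil_mul_le {a : ℝ} {N : ℕ} (hN : N ≠ 0) {p : ℝ≥0∞}
    (h : (⌈a * N⌉₊ : ℝ≥0∞) ≤ N * p) : ENNReal.ofReal a ≤ p := by
  rw [← ENNReal.mul_le_mul_iff_right (Nat.cast_ne_zero.2 hN) (ENNReal.natCast_ne_top N)]
  calc N * ENNReal.ofReal a = ENNReal.ofReal (a * N) := by
        rw [ENNReal.ofReal_mul' (Nat.cast_nonneg N), ENNReal.ofReal_natCast, mul_comm]
    _ ≤ ENNReal.ofReal ⌈a * N⌉₊ := ENNReal.ofReal_le_ofReal (Nat.le_ceil _)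
    _ = ⌈a * N⌉₊ := ENNReal.ofReal_natCast _
    _ ≤ N * p := h

/-- finite-sample marginal coverage of split conformal prediction.
If the `n+1` scores `R(ω)(0), …, R(ω)(n)` are exchangeable, `k = ⌈(1−α)(n+1)⌉`
and `k ≤ n`, then the test score `R(ω)(n)` is at most the `k`-th smallest of
the first `n` (calibration) scores with probability at least `1 − α`. -/
theorem conformal_coverage
    {Ω : Type*} [MeasurableSpace Ω] (μ : Measure Ω) [IsProbabilityMeasure μ]
    (n : ℕ) (hn : 1 ≤ n) (α : ℝ)
    (R : Ω → Fin (n + 1) → ℝ) (hR : Measurable R)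
    (hexch : ∀ σ : Equiv.Perm (Fin (n + 1)),
      Measure.map (fun ω => R ω ∘ σ) μ = Measure.map R μ)
    (k : ℕ) (hk : k = ⌈(1 - α) * ((n : ℝ) + 1)⌉₊) (hkn : k ≤ n) :
    ENNReal.ofReal (1 - α)
      ≤ μ {ω | R ω (Fin.last n)
            ≤ orderStat (fun i : Fin n => R ω (Fin.castSucc i)) ⟨k - 1, by omega⟩} := by
  set j : Fin n := ⟨k - 1, by omega⟩
  set B : Set (Fin (n + 1) → ℝ) := {x | strictRank x (Fin.last n) ≤ j}
  have hevent : {ω | R ω (Fin.last n) ≤ orderStat (fun i => R ω i.castSucc) j} = R ⁻¹' B := by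
    ext ω
    simp only [Set.mem_ofPred_eq, Set.mem_preimage, B, le_orderStat_iff, strictRank_last]
  have hcount : (k : ℝ≥0∞) ≤ Fintype.card (Fin (n + 1)) * μ (R ⁻¹' B) := by
    refine natCast_le_card_mul_measure_of_exchangeable hR hexch
      (measurable_strictRank _ measurableSet_Iic) (Fin.last n) fun x => ?_
    calc k ≤ (j.castSucc : ℕ) + 1 := by rw [Fin.val_castSucc]; exact Nat.le_add_of_sub_le le_rfl
      _ ≤ #{i | strictRank x i ≤ j.castSucc} := le_card_filter_strictRank_le x j.castSucc
      _ = _ := by simp [strictRank_comp_perm]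
  rw [hevent]
  refine ENNReal.ofReal_le_of_ceil_mul_le (N := n + 1) n.succ_ne_zero ?_
  simpa [hk] using hcount
end
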